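/- arXiv:1804.02502 — 3 statements merged into one kernel-verified Lean document; each statement's English description precedes it below -/
import Mathlib

section
/- Let X be a real N×Q data matrix with Q ≥ 2 and let v₁, …, v_N be an orthonormal basis of ℝ^N consisting of eigenvectors of the (symmetric) empirical covariance matrix Cov(X), with Cov(X) vᵢ = λᵢ vᵢ. Let W be the N×N matrix whose i-th row is vᵢ. Then the empirical covariance matrix of the transformed data Y = W X is the diagonal matrix with entries λ₁, …, λ_N; in particular, the PCA-transformed variables are pairwise uncorrelated (PCA completely decorrelates the data), and the variance of the i-th transformed variable equals the eigenvalue λᵢ. -/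
open Matrix

/-- Vector of row means of a data matrix. -/
noncomputable def rowMean {N Q : ℕ} (X : Matrix (Fin N) (Fin Q) ℝ) (i : Fin N) : ℝ :=
  (∑ k, X i k) / Q

/-- The centered data matrix `X - μ_X hᵀ`, where `h` is the all-ones vector. -/
noncomputable def centered {N Q : ℕ} (X : Matrix (Fin N) (Fin Q) ℝ) :
    Matrix (Fin N) (Fin Q) ℝ :=
  X - Matrix.of fun i _ => rowMean X i

/-- Empirical covariance matrix `Cov(X) = (1/(Q-1)) (X - μ_X hᵀ)(X - μ_X hᵀ)ᵀ`. -/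
noncomputable def cov {N Q : ℕ} (X : Matrix (Fin N) (Fin Q) ℝ) :
    Matrix (Fin N) (Fin N) ℝ :=
  ((Q : ℝ) - 1)⁻¹ • (centered X * (centered X)ᵀ)

lemma centered_mul {N Q : ℕ} (W : Matrix (Fin N) (Fin N) ℝ)
    (X : Matrix (Fin N) (Fin Q) ℝ) : centered (W * X) = W * centered X := by
  ext i k
  simp only [centered, rowMean, Matrix.sub_apply, Matrix.mul_apply, Matrix.of_apply]
  rw [Finset.sum_comm]
  simp only [← Finset.sum_mul, mul_sub, Finset.sum_sub_distrib]
  congr 1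
  rw [Finset.sum_div]
  congr 1
  ext j
  rw [← Finset.mul_sum, mul_div_assoc]

lemma cov_mul {N Q : ℕ} (W : Matrix (Fin N) (Fin N) ℝ)
    (X : Matrix (Fin N) (Fin Q) ℝ) : cov (W * X) = W * cov X * Wᵀ := by
  simp only [cov, centered_mul, Matrix.transpose_mul, Matrix.mul_smul,
    Matrix.smul_mul, Matrix.mul_assoc]

theorem pca_decorrelates_data {N Q : ℕ} (hQ : 2 ≤ Q)
    (X : Matrix (Fin N) (Fin Q) ℝ) (v : Fin N → Fin N → ℝ) (lam : Fin N → ℝ)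
    (horth : ∀ i j, v i ⬝ᵥ v j = if i = j then (1 : ℝ) else 0)
    (heig : ∀ i, (cov X).mulVec (v i) = lam i • v i) :
    cov (Matrix.of v * X) = Matrix.diagonal lam ∧
      (∀ i j, i ≠ j → cov (Matrix.of v * X) i j = 0) ∧
      (∀ i, cov (Matrix.of v * X) i i = lam i) := by
  have key : cov (Matrix.of v * X) = Matrix.diagonal lam := by
    rw [cov_mul]
    ext i j
    have h1 : (cov X * (Matrix.of v)ᵀ) = Matrix.of (fun k j => ((cov X).mulVec (v j)) k) := by
      ext k j
      simp [Matrix.mul_apply, Matrix.mulVec, dotProduct]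
    rw [Matrix.mul_assoc, h1]
    simp only [Matrix.mul_apply, Matrix.of_apply, heig, Pi.smul_apply, smul_eq_mul]
    have : ∑ k, v i k * (lam j * v j k) = lam j * (v i ⬝ᵥ v j) := by
      rw [dotProduct, Finset.mul_sum]
      exact Finset.sum_congr rfl fun k _ => by ring
    rw [this, horth]
    by_cases h : i = j <;> simp [h, Matrix.diagonal, eq_comm]
  refine ⟨key, fun i j hij => ?_, fun i => ?_⟩
  · simp [key, Matrix.diagonal_apply_ne _ hij]
  · simp [key]
end

section
/- Let f : ℝ → ℝ be a nonnegative measurable probability density (∫ f = 1) with mean μ = ∫ x f(x) dx and variance σ² = ∫ (x−μ)² f(x) dx, where 0 < σ² < ∞, and suppose f·log f is integrable. Then the differential entropy of f satisfies −∫ f(x) log f(x) dx ≤ (1/2) log(2π e σ²), and equality holds for the Gaussian density g(x) = (2πσ²)^{−1/2} exp(−(x−μ)²/(2σ²)). That is, among all densities with given mean and variance, the normal density maximizes the entropy. -/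
open MeasureTheory Real

/-- The Gaussian density with mean `μ` and variance `σ²`. -/
noncomputable def gaussPDF (μ σ2 : ℝ) (x : ℝ) : ℝ :=
  (Real.sqrt (2 * π * σ2))⁻¹ * Real.exp (-(x - μ) ^ 2 / (2 * σ2))

/-!
Gibbs' inequality `∫ f log g ≤ ∫ f log f` for the Gaussian `g` with the mean and variance of `f`
is the pointwise bound `log t ≤ t - 1`, integrated. Since `log g` is a quadratic polynomial in
`x - μ`, its integral against `f` only involves the total mass and the variance of `f`, hence equals
its integral against `g` itself, which is `-½ log (2πeσ²)`.
-/

lemma mul_log_sub_mul_log_le {a b : ℝ} (ha : 0 ≤ a) (hb : 0 < b) :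
    a * log b - a * log a ≤ b - a := by
  rcases ha.eq_or_lt with rfl | ha
  · simpa using hb.le
  calc a * log b - a * log a = a * log (b / a) := by rw [log_div hb.ne' ha.ne']; ring
    _ ≤ a * (b / a - 1) := mul_le_mul_of_nonneg_left (log_le_sub_one_of_pos (by positivity)) ha.le
    _ = b - a := by field_simp

lemma integral_mul_log_sub_integral_mul_log_le {α : Type*} [MeasurableSpace α] {ν : Measure α}
    {f g : α → ℝ} (hf : 0 ≤ᵐ[ν] f) (hg : ∀ᵐ x ∂ν, 0 < g x)
    (hfg : Integrable (fun x => f x * log (g x)) ν) (hff : Integrable (fun x => f x * log (f x)) ν)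
    (hfi : Integrable f ν) (hgi : Integrable g ν) :
    ∫ x, f x * log (g x) ∂ν - ∫ x, f x * log (f x) ∂ν ≤ ∫ x, g x ∂ν - ∫ x, f x ∂ν := by
  rw [← integral_sub hfg hff, ← integral_sub hgi hfi]
  refine integral_mono_ae (hfg.sub hff) (hgi.sub hfi) ?_
  filter_upwards [hf, hg] with x hfx hgx using mul_log_sub_mul_log_le hfx hgx

section Gaussian

open ProbabilityTheory

variable {μ σ2 : ℝ}

lemma gaussPDF_eq_gaussianPDFReal (hσ : 0 ≤ σ2) :
    gaussPDF μ σ2 = gaussianPDFReal μ σ2.toNNReal := by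
  ext x
  simp [gaussPDF, gaussianPDFReal, Real.coe_toNNReal _ hσ]

lemma gaussPDF_pos (hσ : 0 < σ2) (x : ℝ) : 0 < gaussPDF μ σ2 x := by
  rw [gaussPDF_eq_gaussianPDFReal hσ.le]
  exact gaussianPDFReal_pos _ _ _ (by simpa using hσ)

lemma integrable_gaussPDF (hσ : 0 ≤ σ2) : Integrable (gaussPDF μ σ2) := by
  rw [gaussPDF_eq_gaussianPDFReal hσ]
  exact integrable_gaussianPDFReal _ _

lemma integral_gaussPDF (hσ : 0 < σ2) : ∫ x, gaussPDF μ σ2 x = 1 := by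
  rw [gaussPDF_eq_gaussianPDFReal hσ.le]
  exact integral_gaussianPDFReal_eq_one _ (by simpa using hσ)

lemma integral_sq_sub_mul_gaussPDF (hσ : 0 < σ2) :
    ∫ x, (x - μ) ^ 2 * gaussPDF μ σ2 x = σ2 := by
  have hv : σ2.toNNReal ≠ 0 := by simpa using hσ
  calc ∫ x, (x - μ) ^ 2 * gaussPDF μ σ2 x
      = ∫ x, (x - μ) ^ 2 ∂gaussianReal μ σ2.toNNReal := by
        simp_rw [integral_gaussianReal_eq_integral_smul hv, gaussPDF_eq_gaussianPDFReal hσ.le,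
          smul_eq_mul, mul_comm]
    _ = Var[fun x => x; gaussianReal μ σ2.toNNReal] := by
        rw [variance_eq_integral measurable_id'.aemeasurable, integral_id_gaussianReal]
    _ = σ2 := by simp [hσ.le]

lemma integrable_sq_sub_mul_gaussPDF (hσ : 0 < σ2) :
    Integrable fun x => (x - μ) ^ 2 * gaussPDF μ σ2 x :=
  .of_integral_ne_zero (by rw [integral_sq_sub_mul_gaussPDF hσ]; exact hσ.ne')

lemma log_gaussPDF (hσ : 0 < σ2) (x : ℝ) :
    log (gaussPDF μ σ2 x) = -(1 / 2) * log (2 * π * σ2) - (x - μ) ^ 2 / (2 * σ2) := by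
  rw [gaussPDF, log_mul (by positivity) (exp_ne_zero _), log_inv, log_exp,
    log_sqrt (by positivity)]
  ring

lemma mul_log_gaussPDF (hσ : 0 < σ2) (a x : ℝ) :
    a * log (gaussPDF μ σ2 x) =
      -(1 / 2) * log (2 * π * σ2) * a - (2 * σ2)⁻¹ * ((x - μ) ^ 2 * a) := by
  rw [log_gaussPDF hσ]
  ring

variable {ν : Measure ℝ} {f : ℝ → ℝ}

lemma integrable_mul_log_gaussPDF (hσ : 0 < σ2) (hint : Integrable f ν)
    (hvarInt : Integrable (fun x => (x - μ) ^ 2 * f x) ν) :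
    Integrable (fun x => f x * log (gaussPDF μ σ2 x)) ν := by
  simp_rw [mul_log_gaussPDF hσ]
  exact (hint.const_mul _).sub (hvarInt.const_mul _)

lemma integral_mul_log_gaussPDF (hσ : 0 < σ2) (hint : Integrable f ν) (hprob : ∫ x, f x ∂ν = 1)
    (hvarInt : Integrable (fun x => (x - μ) ^ 2 * f x) ν)
    (hvar : ∫ x, (x - μ) ^ 2 * f x ∂ν = σ2) :
    ∫ x, f x * log (gaussPDF μ σ2 x) ∂ν = -(1 / 2 * log (2 * π * exp 1 * σ2)) := by
  simp_rw [mul_log_gaussPDF hσ]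
  rw [integral_sub (hint.const_mul _) (hvarInt.const_mul _), integral_const_mul,
    integral_const_mul, hprob, hvar, show 2 * π * exp 1 * σ2 = 2 * π * σ2 * exp 1 by ring,
    log_mul (by positivity) (exp_ne_zero 1), log_exp]
  field_simp
  ring

end Gaussian

theorem gaussian_maximizes_entropy_general (f : ℝ → ℝ) (μ σ2 : ℝ)
    (hnonneg : ∀ x, 0 ≤ f x)
    (hint : Integrable f) (hprob : ∫ x, f x = 1)
    (hvarInt : Integrable fun x => (x - μ) ^ 2 * f x)
    (hvar : ∫ x, (x - μ) ^ 2 * f x = σ2) (hσ : 0 < σ2)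
    (hent : Integrable fun x => f x * Real.log (f x)) :
    (-∫ x, f x * Real.log (f x)) ≤ (1 / 2) * Real.log (2 * π * Real.exp 1 * σ2) ∧
      (-∫ x, gaussPDF μ σ2 x * Real.log (gaussPDF μ σ2 x)) =
        (1 / 2) * Real.log (2 * π * Real.exp 1 * σ2) := by
  constructor
  · have gibbs := integral_mul_log_sub_integral_mul_log_le (ae_of_all _ hnonneg)
      (ae_of_all _ (gaussPDF_pos (μ := μ) hσ)) (integrable_mul_log_gaussPDF hσ hint hvarInt) hent
      hint (integrable_gaussPDF hσ.le)
    rw [integral_mul_log_gaussPDF hσ hint hprob hvarInt hvar, integral_gaussPDF hσ, hprob] at gibbs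
    linarith
  · rw [integral_mul_log_gaussPDF hσ (integrable_gaussPDF hσ.le) (integral_gaussPDF hσ)
      (integrable_sq_sub_mul_gaussPDF hσ) (integral_sq_sub_mul_gaussPDF hσ), neg_neg]

theorem gaussian_maximizes_entropy (f : ℝ → ℝ) (μ σ2 : ℝ)
    (hmeas : Measurable f) (hnonneg : ∀ x, 0 ≤ f x)
    (hint : Integrable f) (hprob : ∫ x, f x = 1)
    (hmeanInt : Integrable fun x => x * f x) (hmean : ∫ x, x * f x = μ)
    (hvarInt : Integrable fun x => (x - μ) ^ 2 * f x)
    (hvar : ∫ x, (x - μ) ^ 2 * f x = σ2) (hσ : 0 < σ2)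
    (hent : Integrable fun x => f x * Real.log (f x)) :
    (-∫ x, f x * Real.log (f x)) ≤ (1 / 2) * Real.log (2 * π * Real.exp 1 * σ2) ∧
      (-∫ x, gaussPDF μ σ2 x * Real.log (gaussPDF μ σ2 x)) =
        (1 / 2) * Real.log (2 * π * Real.exp 1 * σ2) :=
  gaussian_maximizes_entropy_general f μ σ2 hnonneg hint hprob hvarInt hvar hσ hent
end

section
/- Let Σ be a real symmetric positive semidefinite N×N matrix with eigenvalues λ₁ ≥ λ₂ ≥ … ≥ λ_N ≥ 0. For every M ≤ N and every real M×N matrix A with orthonormal rows (A Aᵀ = I_M), the determinant of the projected covariance matrix satisfies det(A Σ Aᵀ) ≤ λ₁ · λ₂ · … · λ_M, and equality holds when the rows of A are orthonormal eigenvectors of Σ associated with the M largest eigenvalues. Consequently, for Gaussian data, projecting onto the first M principal axes (the leading principal submatrix of the diagonalized covariance) yields the maximum entropy M-dimensional projection. -/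
/-!
Write `S = Uᵀ D U` with `U` the orthogonal matrix of eigenvectors and `D = diag λ`. For `A` with
orthonormal rows, `B = A Uᵀ` again has orthonormal rows and `A S Aᵀ = B D Bᵀ`. By Cauchy–Binet,
`det (B D Bᵀ) = ∑_T (∏_{t ∈ T} λ_t) det (B_T)²` over `M`-subsets `T` of columns, where
`∑_T det (B_T)² = det (B Bᵀ) = 1`, and each `∏_{t ∈ T} λ_t` is at most `λ₁ ⋯ λ_M` since the
`λ` are nonnegative and decreasing. Equality holds when the rows of `A` are the leading
eigenvectors, as then `A S Aᵀ = diag (λ₁, …, λ_M)`.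
-/

open Matrix

theorem Fin.val_le_of_strictMono {M N : ℕ} {f : Fin M → Fin N} (hf : StrictMono f) (i : Fin M) :
    (i : ℕ) ≤ f i := by
  obtain ⟨k, hk⟩ := i
  induction k with
  | zero => exact Nat.zero_le _
  | succ k ih =>
    have hlt : f ⟨k, by omega⟩ < f ⟨k + 1, hk⟩ := hf (Fin.mk_lt_mk.mpr k.lt_succ_self)
    have := ih (by omega)
    simp only [Fin.lt_def] at hlt
    simp only at this ⊢
    omega

theorem Fin.prod_comp_le_prod_castLE {R : Type*} [CommMonoidWithZero R] [Preorder R]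
    [ZeroLEOneClass R] [PosMulMono R] {M N : ℕ} (h : M ≤ N) {lam : Fin N → R}
    (hanti : Antitone lam) (hnn : ∀ i, 0 ≤ lam i) {r : Fin M → Fin N}
    (hr : Function.Injective r) :
    ∏ i, lam (r i) ≤ ∏ i, lam (Fin.castLE h i) := by
  classical
  set T := Finset.univ.image r
  have hcard : T.card = M := by simp [T, Finset.card_image_of_injective _ hr]
  set f := T.orderEmbOfFin hcard
  have himage : Finset.univ.image f = T := by
    apply Finset.coe_injective
    simp [f]
  have hprod : ∏ i, lam (r i) = ∏ i, lam (f i) := by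
    rw [← Finset.prod_image hr.injOn, ← Finset.prod_image f.injective.injOn, himage]
  rw [hprod]
  refine Finset.prod_le_prod (fun i _ => hnn _) fun i _ => hanti ?_
  exact Fin.le_def.mpr (Fin.val_le_of_strictMono f.strictMono i)

namespace Matrix

section CauchyBinet

variable {m n R : Type*} [Fintype m] [Fintype n] [DecidableEq m] [CommRing R]

theorem det_mul_eq_sum_prod_mul_det_submatrix (P : Matrix m n R) (Q : Matrix n m R) :
    det (P * Q) = ∑ r : m → n, (∏ i, P i (r i)) * det (Q.submatrix r id) := by
  have hrows : P * Q = of fun i => ∑ k, P i k • Q k := by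
    ext i j
    simp [mul_apply]
  rw [hrows]
  change detRowAlternating.toMultilinearMap (fun i => ∑ k, P i k • Q k) = _
  rw [MultilinearMap.map_sum]
  refine Finset.sum_congr rfl fun r _ => ?_
  rw [MultilinearMap.map_smul_univ, smul_eq_mul]
  rfl

/-- Cauchy–Binet, summed over all maps `r : m → n` rather than over subsets: each subset is
counted once per ordering, and non-injective `r` contribute `0`. -/
theorem factorial_card_mul_det_mul (P : Matrix m n R) (Q : Matrix n m R) :
    ((Fintype.card m).factorial : R) * det (P * Q)
      = ∑ r : m → n, det (Pᵀ.submatrix r id) * det (Q.submatrix r id) := by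
  have hsign (r : m → n) (σ : Equiv.Perm m) :
      (∏ i, P i (r (σ i))) * det (Q.submatrix (r ∘ σ) id)
        = (Equiv.Perm.sign σ * ∏ i, Pᵀ.submatrix r id (σ i) i) * det (Q.submatrix r id) := by
    rw [show Q.submatrix (r ∘ σ) id = (Q.submatrix r id).submatrix σ id from rfl, det_permute]
    simp only [submatrix_apply, transpose_apply, id]
    ring
  calc ((Fintype.card m).factorial : R) * det (P * Q)
      = ∑ σ : Equiv.Perm m, ∑ r : m → n,
          (∏ i, P i (r (σ i))) * det (Q.submatrix (r ∘ σ) id) := by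
        rw [← Fintype.card_perm, ← nsmul_eq_mul, ← Finset.card_univ, ← Finset.sum_const]
        refine Finset.sum_congr rfl fun σ _ => ?_
        rw [det_mul_eq_sum_prod_mul_det_submatrix]
        exact ((σ.arrowCongr (Equiv.refl n)).symm.sum_comp _).symm
    _ = ∑ r : m → n, det (Pᵀ.submatrix r id) * det (Q.submatrix r id) := by
        rw [Finset.sum_comm]
        simp only [hsign, ← Finset.sum_mul, ← det_apply']

theorem factorial_card_mul_det_mul_diagonal_mul_transpose [DecidableEq n] (B : Matrix m n R)
    (w : n → R) :
    ((Fintype.card m).factorial : R) * det (B * diagonal w * Bᵀ)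
      = ∑ r : m → n, (∏ i, w (r i)) * det (Bᵀ.submatrix r id) ^ 2 := by
  rw [factorial_card_mul_det_mul]
  refine Finset.sum_congr rfl fun r _ => ?_
  have : (B * diagonal w)ᵀ.submatrix r id = diagonal (w ∘ r) * Bᵀ.submatrix r id := by
    ext i j
    simp [diagonal_mul]
  rw [this, det_mul, det_diagonal]
  simp only [Function.comp_apply]
  ring

end CauchyBinet

theorem det_mul_diagonal_mul_transpose_le {M N : ℕ} (h : M ≤ N)
    {B : Matrix (Fin M) (Fin N) ℝ} (hB : B * Bᵀ = 1) {lam : Fin N → ℝ}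
    (hanti : Antitone lam) (hnn : ∀ i, 0 ≤ lam i) :
    det (B * diagonal lam * Bᵀ) ≤ ∏ i, lam (Fin.castLE h i) := by
  set c := ∏ i, lam (Fin.castLE h i)
  have hmass : ∑ r : Fin M → Fin N, det (Bᵀ.submatrix r id) ^ 2 = (M.factorial : ℝ) := by
    simpa [hB] using (factorial_card_mul_det_mul_diagonal_mul_transpose B (fun _ => 1)).symm
  have hterm (r : Fin M → Fin N) :
      (∏ i, lam (r i)) * det (Bᵀ.submatrix r id) ^ 2 ≤ c * det (Bᵀ.submatrix r id) ^ 2 := by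
    by_cases hr : Function.Injective r
    · exact mul_le_mul_of_nonneg_right (Fin.prod_comp_le_prod_castLE h hanti hnn hr) (sq_nonneg _)
    · obtain ⟨i, j, hij, hne⟩ := Function.not_injective_iff.mp hr
      have : det (Bᵀ.submatrix r id) = 0 := det_zero_of_row_eq hne (funext fun k => by simp [hij])
      simp [this]
  have hfac : (0 : ℝ) < M.factorial := by exact_mod_cast M.factorial_pos
  refine le_of_mul_le_mul_left ?_ hfac
  calc (M.factorial : ℝ) * det (B * diagonal lam * Bᵀ)
      = ∑ r : Fin M → Fin N, (∏ i, lam (r i)) * det (Bᵀ.submatrix r id) ^ 2 := by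
        simpa using factorial_card_mul_det_mul_diagonal_mul_transpose B lam
    _ ≤ ∑ r : Fin M → Fin N, c * det (Bᵀ.submatrix r id) ^ 2 :=
        Finset.sum_le_sum fun r _ => hterm r
    _ = M.factorial * c := by rw [← Finset.mul_sum, hmass, mul_comm]

section Eigenvectors

variable {ι n : Type*} [Fintype n] {v : ι → n → ℝ}

theorem of_mul_transpose_of_eq_one [Fintype ι] [DecidableEq ι]
    (hv : ∀ i j, v i ⬝ᵥ v j = if i = j then (1 : ℝ) else 0) : of v * (of v)ᵀ = 1 := by
  ext i j
  simpa [mul_apply, dotProduct, one_apply] using hv i j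

theorem mul_transpose_of_eq_transpose_of_mul_diagonal [Fintype ι] [DecidableEq ι]
    {S : Matrix n n ℝ} {μ : ι → ℝ} (hSv : ∀ i, S *ᵥ v i = μ i • v i) :
    S * (of v)ᵀ = (of v)ᵀ * diagonal μ := by
  ext k i
  rw [mul_diagonal]
  simpa [mul_apply, mulVec, dotProduct, mul_comm] using congrFun (hSv i) k

theorem det_of_mul_mul_transpose_of [Fintype ι] [DecidableEq ι] {S : Matrix n n ℝ} {μ : ι → ℝ}
    (hv : ∀ i j, v i ⬝ᵥ v j = if i = j then (1 : ℝ) else 0) (hSv : ∀ i, S *ᵥ v i = μ i • v i) :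
    det (of v * S * (of v)ᵀ) = ∏ i, μ i := by
  rw [Matrix.mul_assoc, mul_transpose_of_eq_transpose_of_mul_diagonal hSv, ← Matrix.mul_assoc,
    of_mul_transpose_of_eq_one hv, one_mul, det_diagonal]

theorem eq_transpose_of_mul_diagonal_mul_of [DecidableEq n] {S : Matrix n n ℝ} {v : n → n → ℝ}
    {μ : n → ℝ} (hv : ∀ i j, v i ⬝ᵥ v j = if i = j then (1 : ℝ) else 0)
    (hSv : ∀ i, S *ᵥ v i = μ i • v i) : S = (of v)ᵀ * diagonal μ * of v := by
  rw [← mul_transpose_of_eq_transpose_of_mul_diagonal hSv, Matrix.mul_assoc,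
    mul_eq_one_comm.mp (of_mul_transpose_of_eq_one hv), mul_one]

end Eigenvectors

end Matrix

theorem det_projected_cov_le_prod_top_eigenvalues {N M : ℕ} (hMN : M ≤ N)
    (S : Matrix (Fin N) (Fin N) ℝ) (hS : S.PosSemidef)
    (u : Fin N → Fin N → ℝ) (lam : Fin N → ℝ)
    (horth : ∀ i j, u i ⬝ᵥ u j = if i = j then (1 : ℝ) else 0)
    (heig : ∀ i, S.mulVec (u i) = lam i • u i)
    (hdec : ∀ i j : Fin N, i ≤ j → lam j ≤ lam i) :
    (∀ A : Matrix (Fin M) (Fin N) ℝ, A * Aᵀ = 1 →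
      (A * S * Aᵀ).det ≤ ∏ i : Fin M, lam (Fin.castLE hMN i)) ∧
    ((Matrix.of fun i : Fin M => u (Fin.castLE hMN i)) * S *
        (Matrix.of fun i : Fin M => u (Fin.castLE hMN i))ᵀ).det
      = ∏ i : Fin M, lam (Fin.castLE hMN i) := by
  have hnn (i : Fin N) : 0 ≤ lam i := by
    simpa [heig i, horth i i] using hS.dotProduct_mulVec_nonneg (u i)
  refine ⟨fun A hA => ?_, det_of_mul_mul_transpose_of (fun i j => ?_) fun i => heig _⟩
  · set B := A * (of u)ᵀ
    have hB : B * Bᵀ = 1 := by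
      rw [transpose_mul, transpose_transpose, Matrix.mul_assoc, ← Matrix.mul_assoc (of u)ᵀ,
        mul_eq_one_comm.mp (of_mul_transpose_of_eq_one horth), Matrix.one_mul, hA]
    have hASA : A * S * Aᵀ = B * diagonal lam * Bᵀ := by
      rw [eq_transpose_of_mul_diagonal_mul_of horth heig, transpose_mul, transpose_transpose]
      simp only [B, Matrix.mul_assoc]
    rw [hASA]
    exact det_mul_diagonal_mul_transpose_le hMN hB hdec hnn
  · simp [horth, (Fin.castLE_injective hMN).eq_iff]
end
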